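/- For every partial boolean function f : {0,1}^n → {0,1,*}, every balanced input distribution D = ½D0 + ½D1 for f, and every ε ∈ (0,1/2): bicorr_ε(f,D) ≤ sel_ε(f,D). -/

import Mathlib

open Finset

/-- A deterministic decision tree over alphabet `α`, querying positions `ι`,
with output labels `β`.  A `node i ch` queries position `i` and has one child per symbol. -/
inductive DTree (α ι β : Type) : Type where
  | leaf : β → DTree α ι β
  | node : ι → (α → DTree α ι β) → DTree α ι β

namespace DTree

/-- The output of the tree on input `x`. -/
def eval {α ι β : Type} : DTree α ι β → (ι → α) → β
  | .leaf b, _ => b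
  | .node i ch, x => (ch (x i)).eval x

/-- The depth of a tree: the maximum number of queries along any root-to-leaf path. -/
def depth {α ι β : Type} [Fintype α] : DTree α ι β → ℕ
  | .leaf _ => 0
  | .node _ ch => 1 + Finset.univ.sup fun a => (ch a).depth

/-- `Input(ℓ)` for the leaf `ℓ` reached by `x`: the set of inputs that follow
the same root-to-leaf path as `x`. -/
def reach {α ι β : Type} : DTree α ι β → (ι → α) → Set (ι → α)
  | .leaf _, _ => Set.univ
  | .node i ch, x => {y | y i = x i} ∩ (ch (x i)).reach x

/-- For a tree on `k` samples, the set `ℓ_j ⊆ Σ^n` of strings consistent with the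
queries made to the `j`-th sample on the path followed by input `x`. -/
def reachJ {α β : Type} {k n : ℕ} :
    DTree α (Fin k × Fin n) β → ((Fin k × Fin n) → α) → Fin k → Set (Fin n → α)
  | .leaf _, _, _ => Set.univ
  | .node p ch, x, j =>
      (if p.1 = j then {y : Fin n → α | y p.2 = x p} else Set.univ) ∩ (ch (x p)).reachJ x j

end DTree

/-- Probability mass of a set `S` under (the mass function of) a distribution `D`. -/
noncomputable def prS {γ : Type} [Fintype γ] (D : γ → ℝ) (S : Set γ) : ℝ :=
  ∑ x, S.indicator D x

/-- `D` is a probability mass function on the finite type `γ`. -/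
def IsDist {γ : Type} [Fintype γ] (D : γ → ℝ) : Prop :=
  (∀ x, 0 ≤ D x) ∧ ∑ x, D x = 1

/-- Likelihood ratio `LR(S) = D1(S)/D0(S)`. -/
noncomputable def LR {γ : Type} [Fintype γ] (D0 D1 : γ → ℝ) (S : Set γ) : ℝ :=
  prS D1 S / prS D0 S

/-- The `k`-fold product distribution `D^k` on `k` samples (input flattened). -/
noncomputable def prodD {α : Type} {n k : ℕ} (D : (Fin n → α) → ℝ) :
    ((Fin k × Fin n) → α) → ℝ :=
  fun x => ∏ j, D fun i => x (j, i)

/-- `T` is a `(δ, M)`-likelihood booster for `D0, D1`. -/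
def LBooster {α β : Type} [Fintype α] {n : ℕ}
    (D0 D1 : (Fin n → α) → ℝ) (δ M : ℝ) (T : DTree α (Fin n) β) : Prop :=
  1 - δ ≤ prS D1 {x | M ≤ LR D0 D1 (T.reach x)}

/-- `T` is a `(δ, M)`-overall likelihood booster for `D0^k, D1^k`. -/
def OBooster {α β : Type} [Fintype α] {n k : ℕ}
    (D0 D1 : (Fin n → α) → ℝ) (δ M : ℝ) (T : DTree α (Fin k × Fin n) β) : Prop :=
  1 - δ ≤ prS (prodD D1) {x | M ≤ ∏ j, LR D0 D1 (T.reachJ x j)}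

open scoped Classical in
/-- `T` is a `(δ, ε, M)`-uniform likelihood booster for `D0^k, D1^k`. -/
def UBooster {α β : Type} [Fintype α] {n k : ℕ}
    (D0 D1 : (Fin n → α) → ℝ) (δ ε M : ℝ) (T : DTree α (Fin k × Fin n) β) : Prop :=
  1 - δ ≤ prS (prodD D1)
    {x | (1 - ε) * k ≤ ((Finset.univ.filter fun j => M ≤ LR D0 D1 (T.reachJ x j)).card : ℝ)}

/-- `D = ½D0 + ½D1` is a balanced input distribution for the partial function `f`:
`D_b` is a distribution supported on `f⁻¹(b)`. -/
def BalancedDist {n : ℕ} (f : (Fin n → Bool) → Option Bool) (D0 D1 : (Fin n → Bool) → ℝ) : Prop :=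
  IsDist D0 ∧ IsDist D1 ∧ (∀ x, D0 x ≠ 0 → f x = some false) ∧ ∀ x, D1 x ≠ 0 → f x = some true

/-- `corr_ε(f, D)`: the minimum over `k ≥ 1` of the least depth of a deterministic decision
tree on `k` samples which, for a uniformly random `b`, on input drawn from `D_b^k`
outputs `b` with probability at least `1 - ε`. -/
noncomputable def corrC {n : ℕ} (ε : ℝ) (D0 D1 : (Fin n → Bool) → ℝ) : ℕ :=
  sInf {q | ∃ k, 0 < k ∧ ∃ T : DTree Bool (Fin k × Fin n) Bool, T.depth ≤ q ∧
    1 - ε ≤ (prS (prodD D0) {x | T.eval x = false} + prS (prodD D1) {x | T.eval x = true}) / 2}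

/-- `sel_ε(f, D)`: the minimum over `k ≥ 1` of the least depth of a deterministic decision
tree on `k` samples from `D` outputting a pair `(i, f(xⁱ))` with probability at least `1 - ε`. -/
noncomputable def selC {n : ℕ} (ε : ℝ) (f : (Fin n → Bool) → Option Bool)
    (D : (Fin n → Bool) → ℝ) : ℕ :=
  sInf {q | ∃ k, 0 < k ∧ ∃ T : DTree Bool (Fin k × Fin n) (Fin k × Bool), T.depth ≤ q ∧
    1 - ε ≤ prS (prodD D) {x | f (fun i => x ((T.eval x).1, i)) = some (T.eval x).2}}

/-- The product distribution `D_{ab}^k = (Da × Db)^k` on `k` pairs of samples. -/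
noncomputable def prodD2 {n k : ℕ} (Da Db : (Fin n → Bool) → ℝ) :
    ((Fin k × Fin 2 × Fin n) → Bool) → ℝ :=
  fun x => ∏ j, (Da fun i => x (j, 0, i)) * Db fun i => x (j, 1, i)

/-- `bicorr_ε(f, D)`: minimum over `k ≥ 1` of the least depth of a deterministic decision tree
that distinguishes `D_{01}^k` (output `false`) from `D_{10}^k` (output `true`) with
probability at least `1 - ε` for a uniformly random choice between the two. -/
noncomputable def bicorrC {n : ℕ} (ε : ℝ) (D0 D1 : (Fin n → Bool) → ℝ) : ℕ :=
  sInf {q | ∃ k, 0 < k ∧ ∃ T : DTree Bool (Fin k × Fin 2 × Fin n) Bool, T.depth ≤ q ∧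
    1 - ε ≤ (prS (prodD2 D0 D1) {x | T.eval x = false} +
             prS (prodD2 D1 D0) {x | T.eval x = true}) / 2}

/-- `R_ε(f)`: randomized query complexity, i.e. the least `q` such that some probability
distribution over deterministic decision trees of depth at most `q` outputs `f x`
with probability at least `1 - ε` for every `x` in the domain of `f`. -/
noncomputable def Rq {ι : Type} (ε : ℝ) (f : (ι → Bool) → Option Bool) : ℕ :=
  sInf {q | ∃ (p : ℕ → ℝ) (Ts : ℕ → DTree Bool ι Bool),
    (∀ i, 0 ≤ p i) ∧ (∑' i, p i) = 1 ∧ (∀ i, (Ts i).depth ≤ q) ∧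
    ∀ x b, f x = some b → 1 - ε ≤ ∑' i, if (Ts i).eval x = b then p i else 0}

/-- `corr_ε(f)`: the maximum of `corr_ε(f, D)` over balanced input distributions `D` for `f`. -/
noncomputable def corrMax {n : ℕ} (ε : ℝ) (f : (Fin n → Bool) → Option Bool) : ℕ :=
  sSup {q | ∃ D0 D1, BalancedDist f D0 D1 ∧ q = corrC ε D0 D1}

/-- `sel_ε(f)`: the maximum of `sel_ε(f, D)` over balanced input distributions `D` for `f`. -/
noncomputable def selMax {n : ℕ} (ε : ℝ) (f : (Fin n → Bool) → Option Bool) : ℕ :=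
  sSup {q | ∃ D0 D1, BalancedDist f D0 D1 ∧ q = selC ε f fun x => (D0 x + D1 x) / 2}
/-- The parity (XOR) of all bits of `x`. -/
def XORn {n : ℕ} (x : Fin n → Bool) : Bool :=
  decide ((Finset.univ.filter fun i => x i = true).card % 2 = 1)

/-- The parity of the bits of `x` in positions `≥ 2`. -/
def XORtail {n : ℕ} (x : Fin n → Bool) : Bool :=
  decide ((Finset.univ.filter fun i : Fin n => 2 ≤ (i : ℕ) ∧ x i = true).card % 2 = 1)

/-- `x` with the bits in block `B` flipped. -/
def flipB {n : ℕ} (x : Fin n → Bool) (B : Finset (Fin n)) : Fin n → Bool :=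
  fun i => if i ∈ B then !(x i) else x i

/-- `B` is a sensitive block of `f` on `x`: `x^B` lies in the domain of `f` and
`f(x^B) ≠ f(x)`. -/
def SensBlock {n : ℕ} (f : (Fin n → Bool) → Option Bool) (x : Fin n → Bool)
    (B : Finset (Fin n)) : Prop :=
  (f (flipB x B)).isSome ∧ f (flipB x B) ≠ f x

/-- Fractional block sensitivity `fbs(f) = max_x fbs(f, x)`, where `fbs(f,x)` is the value
of the fractional packing LP over the sensitive blocks of `x`. -/
noncomputable def fbs {n : ℕ} (f : (Fin n → Bool) → Option Bool) : ℝ :=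
  sSup {r | ∃ x, (f x).isSome ∧ ∃ w : Finset (Fin n) → ℝ,
    (∀ B, 0 ≤ w B) ∧ (∀ B, w B ≤ 1) ∧
    (∀ B, w B ≠ 0 → SensBlock f x B) ∧
    (∀ i, ∑ B ∈ Finset.univ.filter (fun B => i ∈ B), w B ≤ 1) ∧
    r = ∑ B, w B}

/-- The composed partial function `f ∘ g`, defined on `(x¹, …, xⁿ)` when every `xⁱ` is in
the domain of `g`, with value `f(g(x¹), …, g(xⁿ))`. -/
def compFG {n m : ℕ} (f : (Fin n → Bool) → Option Bool) (g : (Fin m → Bool) → Option Bool) :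
    ((Fin n × Fin m) → Bool) → Option Bool :=
  fun x =>
    if h : ∀ i, (g fun s => x (i, s)).isSome then
      f fun i => (g fun s => x (i, s)).get (h i)
    else none

/-- Number of queries that `T` makes into block `B` on input `x` (each query reads one bit
`(i, s)`, and counts if `i ∈ B`). -/
def countQ {m n : ℕ} {β : Type} (B : Finset (Fin n)) :
    DTree Bool (Fin n × Fin m) β → ((Fin n × Fin m) → Bool) → ℕ
  | .leaf _, _ => 0
  | .node p ch, x => (if p.1 ∈ B then 1 else 0) + countQ B (ch (x p)) x

/-- The Shaltiel distribution for `XOR_n`, `n = m + 2`: with probability 99/100 output `0`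
followed by `n-1` uniform bits; with probability 1/100 output `1`, one uniform bit, `0^{n-2}`. -/
noncomputable def D16 (m : ℕ) : (Fin (m + 2) → Bool) → ℝ := fun x =>
  (if x 0 = false then (99 / 100) * ((1:ℝ) / 2) ^ (m + 1) else 0) +
  (if x 0 = true ∧ (∀ i : Fin (m + 2), 2 ≤ (i : ℕ) → x i = false) then 1 / 200 else 0)

/-- The distribution of Theorem 2 for `XOR_n`, `n = m + 3`: sample `z` uniform on `n-2` bits,
`a := XOR(z)`, `b` uniform; output `a a z` w.p. 1/100 and `b b z` w.p. 99/100. -/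
noncomputable def D34 (m : ℕ) : (Fin (m + 3) → Bool) → ℝ := fun x =>
  if x 0 = x 1 then
    ((1:ℝ) / 2) ^ (m + 1) * (99 / 200 + if x 0 = XORtail x then 1 / 100 else 0)
  else 0

/-- A distribution conditioned on `XORn x = b` (for distributions giving each value
probability 1/2). -/
noncomputable def condXOR {n : ℕ} (D : (Fin n → Bool) → ℝ) (b : Bool) : (Fin n → Bool) → ℝ :=
  fun x => if XORn x = b then 2 * D x else 0

/-!
Let `T` be a selection tree for `k` samples from `½D0 + ½D1`; each sample is drawn from
`D_{d j}` for a uniformly random sign pattern `d`. Given `k` pairs drawn from `D_c × D_{¬c}` and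
any sign pattern `s`, feed `T` the element in slot `s j` of pair `j`: these are independent
samples from `D_{c xor s j}`. Whenever `T` correctly outputs `(i, f(xⁱ))`, its bit equals
`c xor s i`, so `c` can be read off. Averaging over `s` and `c` reproduces the success
probability of `T` under `D^k`, hence some `s` gives a bicorrelation tree of the same depth that
succeeds with probability at least `1 - ε`.
-/

namespace DTree

variable {α ι ι' β β' : Type}

def relabel (φ : ι → ι') (ψ : β → β') : DTree α ι β → DTree α ι' β'
  | leaf b => leaf (ψ b)
  | node i ch => node (φ i) fun a => (ch a).relabel φ ψ

theorem eval_relabel (φ : ι → ι') (ψ : β → β') (T : DTree α ι β) (x : ι' → α) :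
    (T.relabel φ ψ).eval x = ψ (T.eval (x ∘ φ)) := by
  induction T with
  | leaf b => rfl
  | node i ch ih => exact ih (x (φ i))

theorem depth_relabel [Fintype α] (φ : ι → ι') (ψ : β → β') (T : DTree α ι β) :
    (T.relabel φ ψ).depth = T.depth := by
  induction T with
  | leaf b => rfl
  | node i ch ih => simp only [relabel, depth, ih]

theorem exists_eval_eq_of_dependsOn [DecidableEq ι] [Inhabited α] (s : Finset ι) :
    ∀ g : (ι → α) → β, DependsOn g s → ∃ T : DTree α ι β, ∀ x, T.eval x = g x := by
  induction s using Finset.induction_on with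
  | empty =>
    exact fun g hg => ⟨leaf (g default), fun x => (hg.mono (by simp)).empty default x⟩
  | insert i s _ ih =>
    intro g hg
    have hupd : ∀ a, DependsOn (fun x => g (Function.update x i a)) s := by
      intro a x y hxy
      refine hg fun j hj => ?_
      rcases eq_or_ne j i with rfl | hji
      · simp
      · simpa [hji] using hxy j (by simpa [hji] using hj)
    choose T hT using fun a => ih _ (hupd a)
    exact ⟨node i T, fun x => (hT (x i) x).trans (by simp)⟩

theorem exists_eval_eq [Fintype ι] [DecidableEq ι] [Inhabited α] (g : (ι → α) → β) :
    ∃ T : DTree α ι β, ∀ x, T.eval x = g x :=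
  exists_eval_eq_of_dependsOn Finset.univ g (by simpa using dependsOn_univ g)

end DTree

section prS

variable {X Y Z : Type} [Fintype X] [Fintype Y] [Fintype Z]

theorem prS_univ (D : X → ℝ) : prS D Set.univ = ∑ x, D x := by
  simp [prS]

theorem prS_le_prS_of_support {D : X → ℝ} (hD : ∀ x, 0 ≤ D x) {S S' : Set X}
    (h : ∀ x ∈ S, D x ≠ 0 → x ∈ S') : prS D S ≤ prS D S' := by
  classical
  refine Finset.sum_le_sum fun x _ => ?_
  simp only [Set.indicator_apply]
  split_ifs with hx hx' <;> grind

theorem prS_smul_sum {σ : Type} [Fintype σ] (c : ℝ) (g : σ → X → ℝ) (S : Set X) :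
    prS (c • ∑ i, g i) S = c * ∑ i, prS (g i) S := by
  classical
  simp only [prS, Set.indicator_apply, Pi.smul_apply, Finset.sum_apply, smul_eq_mul]
  rw [Finset.sum_comm, Finset.mul_sum]
  refine Finset.sum_congr rfl fun x _ => ?_
  split_ifs <;> simp [Finset.mul_sum]

theorem prS_preimage_fst (e : X ≃ Y × Z) {P : X → ℝ} {Q : Y → ℝ} {R : Z → ℝ}
    (hP : ∀ x, P x = Q (e x).1 * R (e x).2) (hR : ∑ z, R z = 1) (A : Set Y) :
    prS P {x | (e x).1 ∈ A} = prS Q A := by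
  calc prS P {x | (e x).1 ∈ A}
      = ∑ p : Y × Z, A.indicator Q p.1 * R p.2 := by
        refine Fintype.sum_equiv e _ _ fun x => ?_
        by_cases hx : (e x).1 ∈ A <;> simp [hx, hP]
    _ = prS Q A := by
        rw [Fintype.sum_prod_type]
        simp [← Finset.mul_sum, hR, prS]

end prS

section piD

variable {α : Type} {n k : ℕ}

noncomputable def piD (Ds : Fin k → (Fin n → α) → ℝ) : ((Fin k × Fin n) → α) → ℝ :=
  fun y => ∏ j, Ds j fun i => y (j, i)

theorem piD_nonneg {Ds : Fin k → (Fin n → α) → ℝ} (hDs : ∀ j w, 0 ≤ Ds j w)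
    (y : (Fin k × Fin n) → α) : 0 ≤ piD Ds y :=
  Finset.prod_nonneg fun j _ => hDs j _

theorem sum_piD [Fintype α] (Ds : Fin k → (Fin n → α) → ℝ) :
    ∑ y, piD Ds y = ∏ j, ∑ w, Ds j w := by
  rw [Fintype.prod_sum]
  exact Fintype.sum_equiv (Equiv.curry (Fin k) (Fin n) α) _ _ fun y => rfl

theorem apply_ne_zero_of_piD_ne_zero {Ds : Fin k → (Fin n → α) → ℝ}
    {y : (Fin k × Fin n) → α} (hy : piD Ds y ≠ 0) (j : Fin k) : Ds j (fun i => y (j, i)) ≠ 0 :=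
  fun h => hy (Finset.prod_eq_zero (Finset.mem_univ j) h)

theorem sum_prodD [Fintype α] {D : (Fin n → α) → ℝ} (hD : IsDist D) :
    ∑ y, prodD (k := k) D y = 1 :=
  (sum_piD fun _ => D).trans (by simp [hD.2])

theorem prodD_avg_eq (D0 D1 : (Fin n → α) → ℝ) :
    prodD (k := k) (fun x => (D0 x + D1 x) / 2)
      = ((2 : ℝ) ^ k)⁻¹ • ∑ d : Fin k → Bool, piD fun j => cond (d j) D1 D0 := by
  funext y
  have hpair : ∀ j : Fin k, (D0 (fun i => y (j, i)) + D1 (fun i => y (j, i))) / 2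
      = 2⁻¹ * ∑ b : Bool, cond b D1 D0 (fun i => y (j, i)) := fun j => by
    rw [Fintype.sum_bool, cond_true, cond_false]
    ring
  simp only [prodD, hpair, Finset.prod_mul_distrib, Finset.prod_const, Finset.card_univ,
    Fintype.card_fin, Fintype.prod_sum, piD, Pi.smul_apply, Finset.sum_apply, smul_eq_mul, inv_pow]

end piD

theorem IsDist.cond {γ : Type} [Fintype γ] {D0 D1 : γ → ℝ} (h0 : IsDist D0) (h1 : IsDist D1)
    (b : Bool) : IsDist (cond b D1 D0) := by
  cases b <;> assumption

section pairs

variable {n k : ℕ}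

def pairSplit {α : Type} (s : Fin k → Bool) :
    ((Fin k × Fin 2 × Fin n) → α) ≃
      ((Fin k × Fin n) → α) × ((Fin k × Fin n) → α) where
  toFun x := (fun p => x (p.1, finTwoEquiv.symm (s p.1), p.2),
    fun p => x (p.1, finTwoEquiv.symm (!s p.1), p.2))
  invFun yz p := if finTwoEquiv p.2.1 = s p.1 then yz.1 (p.1, p.2.2) else yz.2 (p.1, p.2.2)
  left_inv x := by
    funext ⟨j, t, i⟩
    by_cases h : finTwoEquiv t = s j
    · simp [← h]
    · simp [h, ← Bool.eq_not.mpr h]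
  right_inv yz := by
    ext p <;> simp

theorem prodD2_cond_eq (D0 D1 : (Fin n → Bool) → ℝ) (c : Bool) (s : Fin k → Bool)
    (x : (Fin k × Fin 2 × Fin n) → Bool) :
    prodD2 (cond c D1 D0) (cond (!c) D1 D0) x
      = piD (fun j => cond (xor c (s j)) D1 D0) (pairSplit s x).1
        * piD (fun j => cond (xor (!c) (s j)) D1 D0) (pairSplit s x).2 := by
  simp only [prodD2, piD, ← Finset.prod_mul_distrib]
  refine Finset.prod_congr rfl fun j _ => ?_
  cases c <;> cases hs : s j <;> simp [pairSplit, finTwoEquiv, hs, mul_comm]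

theorem prS_prodD2_pairSplit {D0 D1 : (Fin n → Bool) → ℝ} (h0 : IsDist D0) (h1 : IsDist D1)
    (c : Bool) (s : Fin k → Bool) (A : Set ((Fin k × Fin n) → Bool)) :
    prS (prodD2 (cond c D1 D0) (cond (!c) D1 D0)) {x | (pairSplit s x).1 ∈ A}
      = prS (piD fun j => cond (xor c (s j)) D1 D0) A :=
  prS_preimage_fst (pairSplit s) (prodD2_cond_eq D0 D1 c s)
    (by rw [sum_piD]; exact Finset.prod_eq_one fun j _ => (h0.cond h1 _).2) A

end pairs

section selection

variable {n k : ℕ} {f : (Fin n → Bool) → Option Bool} {D0 D1 : (Fin n → Bool) → ℝ}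

def selCorrect (f : (Fin n → Bool) → Option Bool)
    (T : DTree Bool (Fin k × Fin n) (Fin k × Bool)) :
    Set ((Fin k × Fin n) → Bool) :=
  {x | f (fun i => x ((T.eval x).1, i)) = some (T.eval x).2}

noncomputable def bicorrSuccess (D0 D1 : (Fin n → Bool) → ℝ)
    (T : DTree Bool (Fin k × Fin 2 × Fin n) Bool) : ℝ :=
  (prS (prodD2 D0 D1) {x | T.eval x = false} + prS (prodD2 D1 D0) {x | T.eval x = true}) / 2

-- Under `D_c × D_{¬c}` the sample read from pair `i` has label `c xor s i`, so a correct answer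
-- `(i, b)` is decoded to `c = b xor s i`.
def pairTree (s : Fin k → Bool) (T : DTree Bool (Fin k × Fin n) (Fin k × Bool)) :
    DTree Bool (Fin k × Fin 2 × Fin n) Bool :=
  T.relabel (fun p => (p.1, finTwoEquiv.symm (s p.1), p.2)) fun o => xor o.2 (s o.1)

theorem BalancedDist.isDist_avg (hD : BalancedDist f D0 D1) :
    IsDist fun x => (D0 x + D1 x) / 2 := by
  refine ⟨fun x => by linarith [hD.1.1 x, hD.2.1.1 x], ?_⟩
  rw [← Finset.sum_div, Finset.sum_add_distrib, hD.1.2, hD.2.1.2]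
  norm_num

theorem BalancedDist.isSome_of_avg_ne_zero (hD : BalancedDist f D0 D1) (x : Fin n → Bool)
    (hx : (D0 x + D1 x) / 2 ≠ 0) : (f x).isSome := by
  by_cases h0 : D0 x = 0
  · simp [hD.2.2.2 x (by simpa [h0] using hx)]
  · simp [hD.2.2.1 x h0]

theorem BalancedDist.apply_eq_of_piD_ne_zero (hD : BalancedDist f D0 D1) {d : Fin k → Bool}
    {y : (Fin k × Fin n) → Bool} (hy : piD (fun j => cond (d j) D1 D0) y ≠ 0) (j : Fin k) :
    f (fun i => y (j, i)) = some (d j) := by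
  have hj := apply_ne_zero_of_piD_ne_zero hy j
  cases hd : d j <;> rw [hd] at hj
  exacts [hD.2.2.1 _ hj, hD.2.2.2 _ hj]

theorem prS_selCorrect_le_prS_pairTree (hD : BalancedDist f D0 D1)
    (T : DTree Bool (Fin k × Fin n) (Fin k × Bool)) (s : Fin k → Bool) (c : Bool) :
    prS (piD fun j => cond (xor c (s j)) D1 D0) (selCorrect f T)
      ≤ prS (prodD2 (cond c D1 D0) (cond (!c) D1 D0)) {x | (pairTree s T).eval x = c} := by
  have hset : {x | (pairTree s T).eval x = c}
      = {x | (pairSplit s x).1 ∈ {y | xor (T.eval y).2 (s (T.eval y).1) = c}} :=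
    Set.ext fun x => by simp only [pairTree, DTree.eval_relabel]; rfl
  rw [hset, prS_prodD2_pairSplit hD.1 hD.2.1]
  refine prS_le_prS_of_support (piD_nonneg fun j => (hD.1.cond hD.2.1 _).1) fun y hy hne => ?_
  have hval := hD.apply_eq_of_piD_ne_zero hne (T.eval y).1
  rw [selCorrect, Set.mem_ofPred_eq, hval, Option.some_inj] at hy
  simp [← hy]

theorem exists_prS_selCorrect_le_bicorrSuccess (hD : BalancedDist f D0 D1)
    (T : DTree Bool (Fin k × Fin n) (Fin k × Bool)) :
    ∃ s, prS (prodD fun x => (D0 x + D1 x) / 2) (selCorrect f T)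
      ≤ bicorrSuccess D0 D1 (pairTree s T) := by
  set C := selCorrect f T
  have hflip : ∑ s : Fin k → Bool, prS (piD fun j => cond (!s j) D1 D0) C
      = ∑ s : Fin k → Bool, prS (piD fun j => cond (s j) D1 D0) C :=
    Fintype.sum_equiv (Equiv.piCongrRight fun _ => Equiv.boolNot) _ _ fun _ => rfl
  have havg : ∑ _s : Fin k → Bool, prS (prodD fun x => (D0 x + D1 x) / 2) C
      ≤ ∑ s, bicorrSuccess D0 D1 (pairTree s T) := by
    calc ∑ _s : Fin k → Bool, prS (prodD fun x => (D0 x + D1 x) / 2) C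
        = ∑ s : Fin k → Bool, prS (piD fun j => cond (s j) D1 D0) C := by
          rw [prodD_avg_eq, prS_smul_sum, Finset.sum_const, Finset.card_univ, Fintype.card_fun,
            Fintype.card_bool, Fintype.card_fin, nsmul_eq_mul]
          push_cast
          field_simp
      _ = ∑ s : Fin k → Bool, (prS (piD fun j => cond (xor false (s j)) D1 D0) C
            + prS (piD fun j => cond (xor true (s j)) D1 D0) C) / 2 := by
          simp only [Bool.false_xor, Bool.true_xor, ← Finset.sum_div, Finset.sum_add_distrib,
            hflip]
          ring
      _ ≤ ∑ s, bicorrSuccess D0 D1 (pairTree s T) := Finset.sum_le_sum fun s _ => by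
          have h0 := prS_selCorrect_le_prS_pairTree hD T s false
          have h1 := prS_selCorrect_le_prS_pairTree hD T s true
          simp only [cond_false, cond_true, Bool.not_false, Bool.not_true] at h0 h1
          unfold bicorrSuccess
          linarith
  obtain ⟨s, -, hs⟩ := Finset.exists_le_of_sum_le Finset.univ_nonempty havg
  exact ⟨s, hs⟩

theorem exists_one_le_prS_selCorrect {D : (Fin n → Bool) → ℝ} (hD : IsDist D)
    (hf : ∀ x, D x ≠ 0 → (f x).isSome) :
    ∃ T : DTree Bool (Fin 1 × Fin n) (Fin 1 × Bool), 1 ≤ prS (prodD D) (selCorrect f T) := by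
  obtain ⟨T, hT⟩ := DTree.exists_eval_eq fun y : (Fin 1 × Fin n) → Bool =>
    ((0 : Fin 1), (f fun i => y (0, i)).getD false)
  refine ⟨T, ?_⟩
  calc 1 = prS (prodD D) Set.univ := by rw [prS_univ, sum_prodD hD]
    _ ≤ prS (prodD D) (selCorrect f T) :=
      prS_le_prS_of_support (piD_nonneg fun _ => hD.1) fun y _ hy => by
        obtain ⟨b, hb⟩ := Option.isSome_iff_exists.mp (hf _ (apply_ne_zero_of_piD_ne_zero hy 0))
        simp [selCorrect, hT, Fin.fin_one_eq_zero, hb]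

end selection

theorem bicorr_le_sel_general {n : ℕ} (f : (Fin n → Bool) → Option Bool)
    (D0 D1 : (Fin n → Bool) → ℝ) (hD : BalancedDist f D0 D1)
    (ε : ℝ) (hε0 : 0 < ε) :
    bicorrC ε D0 D1 ≤ selC ε f fun x => (D0 x + D1 x) / 2 := by
  obtain ⟨T₁, hT₁⟩ := exists_one_le_prS_selCorrect hD.isDist_avg hD.isSome_of_avg_ne_zero
  refine csInf_le_csInf (OrderBot.bddBelow _)
    ⟨T₁.depth, 1, one_pos, T₁, le_rfl, (sub_le_self 1 hε0.le).trans hT₁⟩ ?_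
  rintro q ⟨k, hk, T, hdepth, hT⟩
  obtain ⟨s, hs⟩ := exists_prS_selCorrect_le_bicorrSuccess hD T
  exact ⟨k, hk, pairTree s T, (DTree.depth_relabel _ _ T).trans_le hdepth, hT.trans hs⟩

/-- `bicorr_ε(f,D) ≤ sel_ε(f,D)` for every partial boolean `f`, every
balanced input distribution `D = ½D0 + ½D1` for `f`, and every `ε ∈ (0, 1/2)`. -/
theorem bicorr_le_sel {n : ℕ} (f : (Fin n → Bool) → Option Bool)
    (D0 D1 : (Fin n → Bool) → ℝ) (hD : BalancedDist f D0 D1)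
    (ε : ℝ) (hε0 : 0 < ε) (hε : ε < 1/2) :
    bicorrC ε D0 D1 ≤ selC ε f fun x => (D0 x + D1 x) / 2 :=
  bicorr_le_sel_general f D0 D1 hD ε hε0
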